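/- Let C = (G, M, I) be a formal context with intent set INT and extent set EXT, and suppose (∅, M) is NOT a concept of C. Let C★ = (G, M, I★) with I★ = I \ {(g,m) : g ∈ G} for a fixed m ∈ M, with intent set INT★ and extent set EXT★. Then INT★ = {B \ {m} : B ∈ INT} ∪ {M} and EXT★ \ {∅} ⊆ EXT. -/
import Mathlib


variable {G M : Type*}

/-- Attribute derivation of a set of objects, relative to attribute carrier `atts`. -/
def attUp (atts : Set M) (I : Set (G × M)) (A : Set G) : Set M :=
  {m ∈ atts | ∀ g ∈ A, (g, m) ∈ I}

/-- Object derivation of a set of attributes. -/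
def objDown (I : Set (G × M)) (Bs : Set M) : Set G :=
  {g | ∀ m ∈ Bs, (g, m) ∈ I}

/-- `(A, Bs)` is a formal concept of the context with attribute set `atts` and incidence `I`. -/
def IsConcept (atts : Set M) (I : Set (G × M)) (A : Set G) (Bs : Set M) : Prop :=
  attUp atts I A = Bs ∧ objDown I Bs = A

/-- The set of intents. -/
def intents (atts : Set M) (I : Set (G × M)) : Set (Set M) :=
  {Bs | ∃ A, IsConcept atts I A Bs}

/-- The set of extents. -/
def extents (atts : Set M) (I : Set (G × M)) : Set (Set G) :=
  {A | ∃ Bs, IsConcept atts I A Bs}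

lemma attUp_anti (Ms : Set M) (I : Set (G × M)) {A A' : Set G} (h : A ⊆ A') :
    attUp Ms I A' ⊆ attUp Ms I A := fun n hn => ⟨hn.1, fun g hg => hn.2 g (h hg)⟩

lemma objDown_anti (I : Set (G × M)) {B B' : Set M} (h : B ⊆ B') :
    objDown I B' ⊆ objDown I B := fun g hg n hn => hg n (h hn)

lemma subset_objDown_attUp (Ms : Set M) (I : Set (G × M)) (A : Set G) :
    A ⊆ objDown I (attUp Ms I A) := fun g hg n hn => hn.2 g hg

lemma subset_attUp_objDown (Ms : Set M) (I : Set (G × M)) {B : Set M} (hB : B ⊆ Ms) :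
    B ⊆ attUp Ms I (objDown I B) := fun n hn => ⟨hB hn, fun g hg => hg n hn⟩

lemma attUp_closed (Ms : Set M) (I : Set (G × M)) (A : Set G) :
    attUp Ms I (objDown I (attUp Ms I A)) = attUp Ms I A := by
  apply Set.Subset.antisymm
  · exact attUp_anti Ms I (subset_objDown_attUp Ms I A)
  · exact subset_attUp_objDown Ms I (fun n hn => hn.1)

theorem stmt3 (Ms : Set M) (I : Set (G × M)) (m : M) (hm : m ∈ Ms)
    (hI : ∀ p ∈ I, p.2 ∈ Ms) (hconc : ¬ IsConcept Ms I ∅ Ms) :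
    intents Ms {p ∈ I | p.2 ≠ m} =
      ((fun Bs => Bs \ {m}) '' intents Ms I) ∪ {Ms} ∧
    extents Ms {p ∈ I | p.2 ≠ m} \ {∅} ⊆ extents Ms I := by
  set I' : Set (G × M) := {p ∈ I | p.2 ≠ m} with hI'def
  -- attUp for the starred context on nonempty sets
  have hstar : ∀ A : Set G, A.Nonempty → attUp Ms I' A = attUp Ms I A \ {m} := by
    rintro A ⟨g0, hg0⟩
    ext n
    constructor
    · intro hn
      refine ⟨⟨hn.1, fun g hg => (hn.2 g hg).1⟩, ?_⟩
      simpa using (hn.2 g0 hg0).2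
    · rintro ⟨hn, hnm⟩
      exact ⟨hn.1, fun g hg => ⟨hn.2 g hg, by simpa using hnm⟩⟩
  have hod : ∀ B : Set M, m ∉ B → objDown I' B = objDown I B := by
    intro B hmB
    ext g
    constructor
    · intro hg n hn
      exact (hg n hn).1
    · intro hg n hn
      exact ⟨hg n hn, fun h => hmB (h ▸ hn)⟩
  have hempty : attUp Ms I' (∅ : Set G) = Ms := by
    ext n; simp [attUp]
  have hodMs : objDown I' Ms = (∅ : Set G) := by
    ext g
    simp only [Set.mem_empty_iff_false, iff_false]
    intro hg
    exact (hg m hm).2 rfl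
  constructor
  · apply Set.Subset.antisymm
    · rintro B ⟨A, hAB, hBA⟩
      rcases Set.eq_empty_or_nonempty A with rfl | hA
      · right
        rw [← hAB, hempty]; rfl
      · left
        refine ⟨attUp Ms I A, ⟨objDown I (attUp Ms I A), attUp_closed Ms I A, rfl⟩, ?_⟩
        simp only
        rw [← hAB, hstar A hA]
    · rintro B (⟨B', ⟨A, hAB, hBA⟩, rfl⟩ | hB)
      · -- B' \ {m} is an intent of the starred context
        simp only
        have hB'Ms : B' ⊆ Ms := by rw [← hAB]; exact fun n hn => hn.1
        set A' : Set G := objDown I (B' \ {m}) with hA'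
        have hAA' : A ⊆ A' := by
          rw [← hBA]; exact objDown_anti I (Set.diff_subset)
        have hA'ne : A'.Nonempty := by
          rcases Set.eq_empty_or_nonempty A' with hA'e | h
          · exfalso
            have hAe : A = ∅ := Set.eq_empty_of_subset_empty (hA'e ▸ hAA')
            subst hAe
            have : B' = Ms := by
              rw [← hAB]; ext n; simp [attUp]
            exact hconc ⟨hAB.trans this, this ▸ hBA⟩
          · exact h
        have hsub1 : B' \ {m} ⊆ attUp Ms I A' :=
          subset_attUp_objDown Ms I (fun n hn => hB'Ms hn.1)
        have hsub2 : attUp Ms I A' ⊆ B' := by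
          rw [← hAB]
          exact attUp_anti Ms I hAA'
        refine ⟨A', ?_, ?_⟩
        · rw [hstar A' hA'ne]
          apply Set.Subset.antisymm
          · intro n hn
            exact ⟨hsub2 hn.1, hn.2⟩
          · intro n hn
            exact ⟨hsub1 hn, hn.2⟩
        · rw [hod _ (fun h => h.2 rfl)]
      · -- Ms is an intent of the starred context
        rcases hB with rfl
        exact ⟨∅, hempty, hodMs⟩
  · rintro A ⟨⟨B, hAB, hBA⟩, hAne⟩
    have hA : A.Nonempty := Set.nonempty_iff_ne_empty.mpr (by simpa using hAne)
    have hmB : m ∉ B := by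
      rw [← hAB, hstar A hA]
      exact fun h => h.2 rfl
    refine ⟨attUp Ms I A, rfl, ?_⟩
    apply Set.Subset.antisymm
    · have hBsub : B ⊆ attUp Ms I A := by
        rw [← hAB, hstar A hA]; exact Set.diff_subset
      calc objDown I (attUp Ms I A) ⊆ objDown I B := objDown_anti I hBsub
        _ = objDown I' B := (hod B hmB).symm
        _ = A := hBA
    · exact subset_objDown_attUp Ms I A
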